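/- arXiv:1203.3831 — 2 statements merged into one kernel-verified Lean document; each statement's English description precedes it below -/
import Mathlib

section
/- (Maximal unconditional squeezing.) Let A and D be real 2n×2n matrices such that Ã := −(A + Aᵀ) is positive definite and D is symmetric positive semidefinite. Let σ be a real symmetric 2n×2n matrix satisfying both the uncertainty relation σ + iΩ ≥ 0 and the Lyapunov inequality Aσ + σAᵀ + D ≥ 0. Then the smallest eigenvalue of σ is bounded below as λ₁↑ ≥ α₁↑ / δ₁↓, where α₁↑ is the smallest eigenvalue of Ã and δ₁↓ is the largest eigenvalue of D. -/
open Matrix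
open scoped ComplexOrder

open Classical in
/-- The eigenvalues of a matrix in increasing order (junk value `0` if not Hermitian). -/
noncomputable def eigUp {d : ℕ} (M : Matrix (Fin d) (Fin d) ℝ) : Fin d → ℝ :=
  if h : M.IsHermitian then h.eigenvalues ∘ Tuple.sort h.eigenvalues else 0

/-- The eigenvalues of a matrix in decreasing order. -/
noncomputable def eigDown {d : ℕ} (M : Matrix (Fin d) (Fin d) ℝ) (j : Fin d) : ℝ :=
  eigUp M j.rev

/-- The standard symplectic form on `2n` canonical variables: block diagonal with
blocks `[[0,1],[-1,0]]`. -/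
def Omega (n : ℕ) : Matrix (Fin (2*n)) (Fin (2*n)) ℝ :=
  Matrix.of fun i j =>
    if (i : ℕ) + 1 = (j : ℕ) ∧ (i : ℕ) % 2 = 0 then 1
    else if (j : ℕ) + 1 = (i : ℕ) ∧ (j : ℕ) % 2 = 0 then -1 else 0

/-- Partial transposition matrix `T = 𝟙₂^{⊕ l} ⊕ σz^{⊕ (n-l)}` for the bipartition of the
first `l` versus the last `n - l` modes. -/
def Tmat (n l : ℕ) : Matrix (Fin (2*n)) (Fin (2*n)) ℝ :=
  Matrix.diagonal fun i => if (i : ℕ) / 2 < l ∨ (i : ℕ) % 2 = 0 then 1 else -1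

/-- The partially transposed symplectic form `Ω̃ = T Ω T`. -/
def OmegaPT (n l : ℕ) : Matrix (Fin (2*n)) (Fin (2*n)) ℝ :=
  Tmat n l * Omega n * Tmat n l

open Classical in
/-- The positive square root of a positive semidefinite matrix (junk value `0` otherwise). -/
noncomputable def msqrt {d : ℕ} (M : Matrix (Fin d) (Fin d) ℝ) : Matrix (Fin d) (Fin d) ℝ :=
  if h : M.PosSemidef then
    h.1.eigenvectorUnitary.1 * diagonal ((↑) ∘ (√·) ∘ h.1.eigenvalues) *
      (star h.1.eigenvectorUnitary : Matrix (Fin d) (Fin d) ℝ)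
  else 0

/-- `σ + iΩ ≥ 0`: the Robertson–Schrödinger condition for a real symmetric matrix `σ`
to be a bona fide covariance matrix. -/
def IsCM (n : ℕ) (σ : Matrix (Fin (2*n)) (Fin (2*n)) ℝ) : Prop :=
  σ.IsSymm ∧
    (σ.map (Complex.ofReal ·) + Complex.I • (Omega n).map (Complex.ofReal ·)).PosSemidef

/-- `ν̃₋²`, the square of the smallest partially transposed symplectic eigenvalue of `σ`, for
the bipartition of the first `l` versus the remaining modes: the smallest eigenvalue of
`σ^{1/2} Ω̃ᵀ σ Ω̃ σ^{1/2}`. -/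
noncomputable def nuSq (n l : ℕ) (σ : Matrix (Fin (2*n)) (Fin (2*n)) ℝ) : ℝ :=
  sInf (spectrum ℝ (msqrt σ * (OmegaPT n l)ᵀ * σ * OmegaPT n l * msqrt σ))

/-- `ν̃₋`, the smallest partially transposed symplectic eigenvalue of `σ`. -/
noncomputable def nuMin (n l : ℕ) (σ : Matrix (Fin (2*n)) (Fin (2*n)) ℝ) : ℝ :=
  Real.sqrt (nuSq n l σ)

/-- The logarithmic negativity `E_N(σ) = max (0, −log₂ ν̃₋)`. -/
noncomputable def logNeg (n l : ℕ) (σ : Matrix (Fin (2*n)) (Fin (2*n)) ℝ) : ℝ :=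
  max 0 (-(Real.logb 2 (nuMin n l σ)))

/-!
Let `λ↑ ≤ λ↓` be the extreme eigenvalues of `σ`. Testing the Lyapunov inequality on a top
eigenvector `y` of `σ` gives `λ↓ ⟨y, Ã y⟩ ≤ ⟨y, D y⟩`, hence `α₁↑ λ↓ ≤ δ₁↓`. Testing the
uncertainty relation `σ + iΩ ≥ 0` on `x + i t Ωᵀx`, for a bottom unit eigenvector `x`, gives
`2t ≤ λ↑ + λ↓ t²` for every real `t`, so the discriminant bound yields `λ↑ λ↓ ≥ 1`.
Hence `λ↑ ≥ 1 / λ↓ ≥ α₁↑ / δ₁↓`.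
-/

lemma Omega_transpose (n : ℕ) : (Omega n)ᵀ = -Omega n := by
  ext i j
  simp only [Omega, transpose_apply, Matrix.neg_apply, of_apply]
  split_ifs <;> first | omega | norm_num

lemma Omega_mul_transpose (n : ℕ) : Omega n * (Omega n)ᵀ = 1 := by
  ext i k
  have hi := i.isLt
  -- the only nonzero entry of row `i` sits at its conjugate index `p`
  let p : Fin (2 * n) := ⟨if (i : ℕ) % 2 = 0 then i + 1 else i - 1, by split_ifs <;> omega⟩
  rw [mul_apply, Finset.sum_eq_single p]
  · simp only [Omega, transpose_apply, of_apply, one_apply, p, Fin.ext_iff]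
    split_ifs <;> first | omega | norm_num
  · intro j _ hj
    simp only [Omega, of_apply, p, ne_eq, Fin.ext_iff] at hj ⊢
    split_ifs at hj ⊢ <;> first | omega | simp
  · simp

lemma skew_form_le_of_posSemidef {ι : Type*} [Fintype ι] {S K : Matrix ι ι ℝ}
    (h : (S.map (Complex.ofReal ·) + Complex.I • K.map (Complex.ofReal ·)).PosSemidef)
    (u v : ι → ℝ) : u ⬝ᵥ K *ᵥ v - v ⬝ᵥ K *ᵥ u ≤ u ⬝ᵥ S *ᵥ u + v ⬝ᵥ S *ᵥ v := by
  let z : ι → ℂ := fun i => u i + Complex.I * v i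
  have hz := (Complex.nonneg_iff.mp (h.dotProduct_mulVec_nonneg z)).1
  have hre :
      (star z ⬝ᵥ (S.map (Complex.ofReal ·) + Complex.I • K.map (Complex.ofReal ·)) *ᵥ z).re =
        u ⬝ᵥ S *ᵥ u + v ⬝ᵥ S *ᵥ v - (u ⬝ᵥ K *ᵥ v - v ⬝ᵥ K *ᵥ u) := by
    simp only [z, dotProduct, mulVec, Finset.mul_sum, Complex.re_sum, ← Finset.sum_add_distrib,
      ← Finset.sum_sub_distrib]
    refine Finset.sum_congr rfl fun i _ => Finset.sum_congr rfl fun j _ => ?_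
    simp only [Pi.star_apply, star_add, RCLike.star_def, Complex.conj_ofReal, star_mul',
      Complex.conj_I, neg_mul, Matrix.add_apply, map_apply, Matrix.smul_apply, smul_eq_mul,
      Complex.mul_re, Complex.add_re, Complex.ofReal_re, Complex.neg_re, Complex.I_re, zero_mul,
      Complex.I_im, Complex.ofReal_im, mul_zero, sub_self, neg_zero, add_zero, Complex.add_im,
      Complex.mul_im, one_mul, zero_add, Complex.neg_im, sub_neg_eq_add]
    ring
  linarith

open scoped MatrixOrder

section Rayleigh

variable {ι : Type*} [Fintype ι] [DecidableEq ι] {M : Matrix ι ι ℝ} {c : ℝ}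

lemma mul_dotProduct_le_of_algebraMap_le (h : algebraMap ℝ _ c ≤ M) (x : ι → ℝ) :
    c * (x ⬝ᵥ x) ≤ x ⬝ᵥ M *ᵥ x := by
  have := (le_iff.mp h).dotProduct_mulVec_nonneg x
  rw [star_trivial, sub_mulVec, dotProduct_sub, Algebra.algebraMap_eq_smul_one, smul_mulVec,
    one_mulVec, dotProduct_smul, smul_eq_mul] at this
  linarith

lemma dotProduct_mulVec_le_of_le_algebraMap (h : M ≤ algebraMap ℝ _ c) (x : ι → ℝ) :
    x ⬝ᵥ M *ᵥ x ≤ c * (x ⬝ᵥ x) := by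
  have := (le_iff.mp h).dotProduct_mulVec_nonneg x
  rw [star_trivial, sub_mulVec, dotProduct_sub, Algebra.algebraMap_eq_smul_one, smul_mulVec,
    one_mulVec, dotProduct_smul, smul_eq_mul] at this
  linarith

end Rayleigh

namespace Matrix.IsHermitian

variable {d : ℕ} {M : Matrix (Fin d) (Fin d) ℝ}

lemma eigUp_eq (hM : M.IsHermitian) (i : Fin d) :
    eigUp M i = hM.eigenvalues (Tuple.sort hM.eigenvalues i) := by
  simp only [eigUp, dif_pos hM, Function.comp_apply]

lemma eigUp_zero_le (hM : M.IsHermitian) (h0 : 0 < d) (i : Fin d) :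
    eigUp M ⟨0, h0⟩ ≤ hM.eigenvalues i := by
  obtain ⟨j, rfl⟩ := (Tuple.sort hM.eigenvalues).surjective i
  rw [hM.eigUp_eq]
  exact Tuple.monotone_sort hM.eigenvalues (Fin.le_def.mpr (Nat.zero_le _))

lemma le_eigDown_zero (hM : M.IsHermitian) (h0 : 0 < d) (i : Fin d) :
    hM.eigenvalues i ≤ eigDown M ⟨0, h0⟩ := by
  obtain ⟨j, rfl⟩ := (Tuple.sort hM.eigenvalues).surjective i
  rw [eigDown, hM.eigUp_eq]
  exact Tuple.monotone_sort hM.eigenvalues (by simp only [Fin.le_def, Fin.val_rev]; omega)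

lemma eigUp_zero_mul_dotProduct_le (hM : M.IsHermitian) (h0 : 0 < d) (x : Fin d → ℝ) :
    eigUp M ⟨0, h0⟩ * (x ⬝ᵥ x) ≤ x ⬝ᵥ M *ᵥ x := by
  refine mul_dotProduct_le_of_algebraMap_le ?_ x
  rw [algebraMap_le_iff_le_spectrum hM.isSelfAdjoint, hM.spectrum_real_eq_range_eigenvalues]
  rintro _ ⟨i, rfl⟩
  exact hM.eigUp_zero_le h0 i

lemma dotProduct_mulVec_le_eigDown_zero_mul (hM : M.IsHermitian) (h0 : 0 < d)
    (x : Fin d → ℝ) : x ⬝ᵥ M *ᵥ x ≤ eigDown M ⟨0, h0⟩ * (x ⬝ᵥ x) := by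
  refine dotProduct_mulVec_le_of_le_algebraMap ?_ x
  rw [le_algebraMap_iff_spectrum_le hM.isSelfAdjoint, hM.spectrum_real_eq_range_eigenvalues]
  rintro _ ⟨i, rfl⟩
  exact hM.le_eigDown_zero h0 i

lemma exists_mulVec_eq_eigUp_smul (hM : M.IsHermitian) (i : Fin d) :
    ∃ x : Fin d → ℝ, x ⬝ᵥ x = 1 ∧ M *ᵥ x = eigUp M i • x := by
  set b := hM.eigenvectorBasis (Tuple.sort hM.eigenvalues i)
  refine ⟨b, ?_, ?_⟩
  · have h := EuclideanSpace.inner_eq_star_dotProduct b b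
    rwa [real_inner_self_eq_norm_sq, hM.eigenvectorBasis.norm_eq_one, one_pow, star_trivial,
      eq_comm] at h
  · rw [hM.eigUp_eq]
    exact hM.mulVec_eigenvectorBasis _

end Matrix.IsHermitian

lemma Matrix.PosSemidef.eigUp_nonneg {d : ℕ} {M : Matrix (Fin d) (Fin d) ℝ} (hM : M.PosSemidef)
    (i : Fin d) : 0 ≤ eigUp M i := by
  rw [hM.isHermitian.eigUp_eq]
  exact hM.eigenvalues_nonneg _

lemma Matrix.PosDef.eigUp_pos {d : ℕ} {M : Matrix (Fin d) (Fin d) ℝ} (hM : M.PosDef)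
    (i : Fin d) : 0 < eigUp M i := by
  rw [hM.isHermitian.eigUp_eq]
  exact hM.eigenvalues_pos _

lemma mul_dotProduct_le_of_lyapunov {ι : Type*} [Fintype ι] {A D σ : Matrix ι ι ℝ}
    (hσ : σ.IsSymm) (hLyap : (A * σ + σ * Aᵀ + D).PosSemidef) {μ : ℝ} {y : ι → ℝ}
    (hy : σ *ᵥ y = μ • y) : μ * (y ⬝ᵥ (-(A + Aᵀ)) *ᵥ y) ≤ y ⬝ᵥ D *ᵥ y := by
  have h := hLyap.dotProduct_mulVec_nonneg y
  have hσA : y ⬝ᵥ (σ * Aᵀ) *ᵥ y = μ * (y ⬝ᵥ Aᵀ *ᵥ y) := by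
    rw [← mulVec_mulVec, dotProduct_mulVec, ← mulVec_transpose, hσ.eq, hy, smul_dotProduct,
      smul_eq_mul]
  rw [star_trivial, add_mulVec, add_mulVec, dotProduct_add, dotProduct_add, hσA,
    ← mulVec_mulVec, hy, mulVec_smul, dotProduct_smul, smul_eq_mul] at h
  rw [neg_mulVec, add_mulVec, dotProduct_neg, dotProduct_add]
  linarith

namespace IsCM

variable {n : ℕ} {σ : Matrix (Fin (2*n)) (Fin (2*n)) ℝ}

lemma two_mul_le (hCM : IsCM n σ) (u v : Fin (2*n) → ℝ) :
    2 * (u ⬝ᵥ Omega n *ᵥ v) ≤ u ⬝ᵥ σ *ᵥ u + v ⬝ᵥ σ *ᵥ v := by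
  have hskew : v ⬝ᵥ Omega n *ᵥ u = -(u ⬝ᵥ Omega n *ᵥ v) := by
    rw [dotProduct_mulVec, ← mulVec_transpose, Omega_transpose, neg_mulVec, neg_dotProduct,
      dotProduct_comm]
  linarith [skew_form_le_of_posSemidef hCM.2 u v]

lemma posSemidef (hCM : IsCM n σ) : σ.PosSemidef :=
  .of_dotProduct_mulVec_nonneg (isHermitian_iff_isSymm.mpr hCM.1) fun x => by
    simpa using hCM.two_mul_le x 0

lemma one_le_eigUp_mul_eigDown (hCM : IsCM n σ) (h0 : 0 < 2 * n) :
    1 ≤ eigUp σ ⟨0, h0⟩ * eigDown σ ⟨0, h0⟩ := by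
  have hσ := hCM.posSemidef.isHermitian
  obtain ⟨x, hx1, hxσ⟩ := hσ.exists_mulVec_eq_eigUp_smul ⟨0, h0⟩
  set w := (Omega n)ᵀ *ᵥ x
  have hxw : x ⬝ᵥ Omega n *ᵥ w = 1 := by
    rw [mulVec_mulVec, Omega_mul_transpose, one_mulVec, hx1]
  have hww : w ⬝ᵥ w = 1 := by
    rw [dotProduct_mulVec, vecMul_transpose, mulVec_mulVec, Omega_mul_transpose, one_mulVec, hx1]
  have hquad : ∀ t : ℝ, 0 ≤ eigDown σ ⟨0, h0⟩ * (t * t) + (-2) * t + eigUp σ ⟨0, h0⟩ := by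
    intro t
    have h := hCM.two_mul_le x (t • w)
    have hw := hσ.dotProduct_mulVec_le_eigDown_zero_mul h0 w
    rw [mulVec_smul, dotProduct_smul, hxw, hxσ, dotProduct_smul, hx1, smul_dotProduct,
      mulVec_smul, dotProduct_smul] at h
    simp only [smul_eq_mul, mul_one] at h
    rw [hww, mul_one] at hw
    nlinarith [mul_le_mul_of_nonneg_left hw (mul_self_nonneg t)]
  have := discrim_le_zero hquad
  rw [discrim] at this
  linarith

end IsCM

/-- **Proposition 1 (Maximal unconditional squeezing).**
If `Ã := −(A + Aᵀ)` is positive definite, `D` is positive semidefinite, and the covariance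
matrix `σ` (i.e. `σ + iΩ ≥ 0`) satisfies `Aσ + σAᵀ + D ≥ 0`, then the smallest eigenvalue
of `σ` satisfies `λ₁↑ ≥ α₁↑ / δ₁↓`. -/
theorem maximal_unconditional_squeezing (n : ℕ) (hn : 1 ≤ n)
    (A D σ : Matrix (Fin (2*n)) (Fin (2*n)) ℝ)
    (hA : (-(A + Aᵀ)).PosDef) (hD : D.PosSemidef)
    (hCM : IsCM n σ) (hLyap : (A * σ + σ * Aᵀ + D).PosSemidef) :
    eigUp (-(A + Aᵀ)) ⟨0, by omega⟩ / eigDown D ⟨0, by omega⟩ ≤ eigUp σ ⟨0, by omega⟩ := by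
  have h0 : 0 < 2 * n := by omega
  have hσ := hCM.posSemidef
  set α := eigUp (-(A + Aᵀ)) ⟨0, h0⟩
  set δ := eigDown D ⟨0, h0⟩
  set lmin := eigUp σ ⟨0, h0⟩
  set lmax := eigDown σ ⟨0, h0⟩
  obtain ⟨y, hy1, hyσ⟩ := hσ.isHermitian.exists_mulVec_eq_eigUp_smul (⟨0, h0⟩ : Fin (2*n)).rev
  have hdiss : α * lmax ≤ δ := calc
    α * lmax = lmax * (α * (y ⬝ᵥ y)) := by rw [hy1]; ring
    _ ≤ lmax * (y ⬝ᵥ (-(A + Aᵀ)) *ᵥ y) :=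
      mul_le_mul_of_nonneg_left (hA.isHermitian.eigUp_zero_mul_dotProduct_le h0 y)
        (hσ.eigUp_nonneg _)
    _ ≤ y ⬝ᵥ D *ᵥ y := mul_dotProduct_le_of_lyapunov hCM.1 hLyap hyσ
    _ ≤ δ * (y ⬝ᵥ y) := hD.isHermitian.dotProduct_mulVec_le_eigDown_zero_mul h0 y
    _ = δ := by rw [hy1, mul_one]
  have hunc : 1 ≤ lmin * lmax := hCM.one_le_eigUp_mul_eigDown h0
  have hα : 0 < α := hA.eigUp_pos _
  have hlmin : 0 ≤ lmin := hσ.eigUp_nonneg _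
  have hlmax : 0 < lmax := pos_of_mul_pos_right (one_pos.trans_le hunc) hlmin
  rw [div_le_iff₀ ((mul_pos hα hlmax).trans_le hdiss)]
  calc α ≤ α * (lmin * lmax) := le_mul_of_one_le_right hα.le hunc
    _ = lmin * (α * lmax) := by ring
    _ ≤ lmin * δ := mul_le_mul_of_nonneg_left hdiss hlmin
end

section
/- (Parametric system, free steady state and its entanglement.) Fix N ≥ 0 and 0 ≤ χ < 1/2, and set M = [[0, σz],[σz, 0]], A = −(1/2)𝟙₄ + χM, and D = (1+2N)𝟙₄. Then the matrix σ₀ = ((1+2N)/(1−4χ²)) · [[𝟙₂, 2χσz],[2χσz, 𝟙₂]] is the unique solution of the Lyapunov equation Aσ + σAᵀ + D = 0; it is a valid covariance matrix (σ₀ + iΩ ≥ 0), and its smallest partially transposed symplectic eigenvalue for the 1 vs 1 bipartition equals (1+2N)/(1+2χ), so that its logarithmic negativity is E_N(σ₀) = max(0, log₂(1+2χ) − log₂(1+2N)). -/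
/-!
The coupling `M` is a symmetric involution and `σ₀ = c(1 + 2χM)`, `c = (1 + 2N)/(1 - 4χ²)`,
lies in the algebra spanned by `1` and `M`. Since `M² = 1`, the Lyapunov operator `X ↦ AX + XA` with `A = -½ + χM` is injective when
`4χ² ≠ 1`, and `σ₀ = c(1 + 2χM)` solves the equation. The matrix `M` commutes with the
orthogonal matrix `Ω̃`, so `Ω̃ᵀσ₀Ω̃ = σ₀` and `ν̃₋²` is the least eigenvalue of
`σ₀² = c²(1 + 4χ²) + 4c²χM`, namely `c²(1 - 2χ)²`. Finally `M` anticommutes with `Ω`, so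
`K = 2cχM + iΩ` satisfies `K² = 1 + 4c²χ²`, whence `σ₀ + iΩ = c + K ≥ c - √(1 + 4c²χ²) ≥ 0`.
-/

open Matrix
open scoped ComplexOrder

section Involution

variable {𝕜 R : Type*} [Field 𝕜] [Ring R] [Algebra 𝕜 R] {M : R}

theorem add_smul_mul_sub_smul_of_mul_self_eq_one (hM : M * M = 1) (u t : 𝕜) :
    (u • 1 + t • M) * (u • 1 - t • M) = (u ^ 2 - t ^ 2) • (1 : R) := by
  simp only [add_mul, mul_sub, smul_mul_smul, one_mul, mul_one, hM, sub_smul]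
  module

theorem spectrum_smul_one_add_smul_of_mul_self_eq_one (hM : M * M = 1) (h1 : M ≠ 1)
    (h2 : M ≠ -1) (a b : 𝕜) :
    spectrum 𝕜 (a • 1 + b • M) = {a + b, a - b} := by
  ext μ
  have hX : algebraMap 𝕜 R μ - (a • 1 + b • M) = (μ - a) • 1 + (-b) • M := by
    rw [Algebra.algebraMap_eq_smul_one]; module
  rw [spectrum.mem_iff, hX, Set.mem_insert_iff, Set.mem_singleton_iff]
  constructor
  · intro hnu
    by_contra! hne
    have hk : (μ - a) ^ 2 - b ^ 2 ≠ 0 := by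
      rw [show (μ - a) ^ 2 - b ^ 2 = (μ - a - b) * (μ - a + b) by ring]
      exact mul_ne_zero (by grind) (by grind)
    refine hnu ⟨⟨_, ((μ - a) ^ 2 - b ^ 2)⁻¹ • ((μ - a) • 1 - (-b) • M), ?_, ?_⟩, rfl⟩
    · rw [mul_smul_comm, add_smul_mul_sub_smul_of_mul_self_eq_one hM, smul_smul, neg_sq,
        inv_mul_cancel₀ hk, one_smul]
    · rw [smul_mul_assoc, neg_smul, sub_neg_eq_add, ← sub_eq_add_neg,
        add_smul_mul_sub_smul_of_mul_self_eq_one hM, smul_smul, inv_mul_cancel₀ hk, one_smul]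
  · rintro (h | h) hu
    · apply h2
      have : ((μ - a) • 1 + (-b) • M) * (1 + M) = 0 := by
        simp only [h, add_mul, mul_add, one_mul, mul_one, smul_mul_assoc, hM]
        module
      rw [eq_neg_iff_add_eq_zero, add_comm]
      exact hu.mul_right_eq_zero.mp this
    · apply h1
      have : ((μ - a) • 1 + (-b) • M) * (1 - M) = 0 := by
        simp only [h, add_mul, mul_sub, one_mul, mul_one, smul_mul_assoc, hM]
        module
      exact (sub_eq_zero.mp (hu.mul_right_eq_zero.mp this)).symm

variable [NeZero (2 : 𝕜)]

theorem lyapunov_steady_state (hM : M * M = 1) {χ : 𝕜} (hχ : 1 - 4 * χ ^ 2 ≠ 0) (d : 𝕜) :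
    ((-(1 / 2) : 𝕜) • 1 + χ • M) * ((d / (1 - 4 * χ ^ 2)) • (1 + (2 * χ) • M)) +
      (d / (1 - 4 * χ ^ 2)) • (1 + (2 * χ) • M) * ((-(1 / 2) : 𝕜) • 1 + χ • M) + d • 1 = 0 := by
  simp only [add_mul, mul_add, one_mul, mul_one, smul_mul_assoc, mul_smul_comm, hM]
  match_scalars <;> field_simp <;> ring

theorem lyapunov_injective (hM : M * M = 1) {χ : 𝕜} (hχ : 1 - 4 * χ ^ 2 ≠ 0) :
    Function.Injective fun X : R =>
      ((-(1 / 2) : 𝕜) • 1 + χ • M) * X + X * ((-(1 / 2) : 𝕜) • 1 + χ • M) := by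
  intro X Y hXY
  set δ := X - Y
  have hδ : δ = χ • (M * δ + δ * M) := by
    have h0 : ((-(1 / 2) : 𝕜) • 1 + χ • M) * δ + δ * ((-(1 / 2) : 𝕜) • 1 + χ • M) = 0 := by
      simp only [δ, mul_sub, sub_mul]
      rw [sub_add_sub_comm, sub_eq_zero]
      exact hXY
    rw [← sub_eq_zero, ← neg_eq_zero, ← h0]
    simp only [add_mul, mul_add, smul_mul_assoc, mul_smul_comm, one_mul, mul_one]
    match_scalars <;> field_simp <;> ring
  -- conjugation by `M` fixes `δ`, so `M` acts on `δ` as `2χ` and `δ = 4χ²δ`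
  have hMM (Z : R) : M * (M * Z) = Z := by rw [← mul_assoc, hM, one_mul]
  have hMδM : M * δ * M = δ := by
    calc M * δ * M = χ • (M * (M * δ) * M + M * (δ * M) * M) := by
          conv_lhs => rw [hδ]
          simp only [mul_smul_comm, smul_mul_assoc, mul_add, add_mul]
      _ = δ := by simp only [mul_assoc, hMM, hM, mul_one]; rw [add_comm, ← hδ]
  have hMδ : M * δ = (2 * χ) • δ := by
    calc M * δ = χ • (M * (M * δ) + M * δ * M) := by
          conv_lhs => rw [hδ]
          rw [mul_smul_comm, mul_add, mul_assoc]
      _ = (2 * χ) • δ := by rw [hMM, hMδM]; module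
  have hδM : δ * M = (2 * χ) • δ := by
    conv_lhs => rw [← hMδM]
    rw [mul_assoc, hM, mul_one, hMδ]
  have : (1 - 4 * χ ^ 2) • δ = 0 := by
    rw [sub_smul, one_smul]
    conv_lhs => enter [1]; rw [hδ, hMδ, hδM]
    module
  exact sub_eq_zero.mp ((smul_eq_zero.mp this).resolve_left hχ)

end Involution

theorem Matrix.IsHermitian.posSemidef_smul_one_add_of_mul_self_eq {n 𝕜 : Type*} [Fintype n]
    [DecidableEq n] [RCLike 𝕜] {K : Matrix n n 𝕜} (hK : K.IsHermitian) {s : ℝ} (hs : 0 < s)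
    (hKK : K * K = (s ^ 2) • 1) : (s • 1 + K).PosSemidef := by
  have hsq : (s • 1 + K)ᴴ * (s • 1 + K) = (2 * s) • (s • 1 + K) := by
    rw [conjTranspose_add, hK.eq, conjTranspose_smul, conjTranspose_one, star_trivial]
    simp only [add_mul, mul_add, one_mul, mul_one, smul_mul_assoc, mul_smul_comm, hKK]
    module
  have : s • 1 + K = (2 * s)⁻¹ • ((s • 1 + K)ᴴ * (s • 1 + K)) := by
    rw [hsq, smul_smul, inv_mul_cancel₀ (by positivity), one_smul]
  rw [this]
  exact (posSemidef_conjTranspose_mul_self _).smul (by positivity)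

theorem msqrt_mul_self {d : ℕ} {M : Matrix (Fin d) (Fin d) ℝ} (h : M.PosSemidef) :
    msqrt M * msqrt M = M := by
  rw [msqrt, dif_pos h]
  conv_rhs => rw [h.1.spectral_theorem, Unitary.conjStarAlgAut_apply]
  simp only [mul_assoc]
  rw [← mul_assoc (star _ : Matrix (Fin d) (Fin d) ℝ), Unitary.coe_star_mul_self, one_mul,
    ← mul_assoc (diagonal _), diagonal_mul_diagonal]
  congr 3
  funext i
  simp [Real.mul_self_sqrt (h.eigenvalues_nonneg i)]

theorem nuSq_eq_sInf_spectrum_mul_self {n l : ℕ} {σ : Matrix (Fin (2*n)) (Fin (2*n)) ℝ}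
    (hσ : σ.PosSemidef) (hΩ : (OmegaPT n l)ᵀ * σ * OmegaPT n l = σ) :
    nuSq n l σ = sInf (spectrum ℝ (σ * σ)) := by
  rw [nuSq]
  congr 2
  calc msqrt σ * (OmegaPT n l)ᵀ * σ * OmegaPT n l * msqrt σ
      = msqrt σ * ((OmegaPT n l)ᵀ * σ * OmegaPT n l) * msqrt σ := by simp only [mul_assoc]
    _ = msqrt σ * (msqrt σ * msqrt σ) * msqrt σ := by rw [hΩ, msqrt_mul_self hσ]
    _ = (msqrt σ * msqrt σ) * (msqrt σ * msqrt σ) := by simp only [mul_assoc]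
    _ = σ * σ := by rw [msqrt_mul_self hσ]

def pdcCoupling : Matrix (Fin (2*2)) (Fin (2*2)) ℝ := !![0,0,1,0; 0,0,0,-1; 1,0,0,0; 0,-1,0,0]

theorem omega_two : Omega 2 = !![0,1,0,0; -1,0,0,0; 0,0,0,1; 0,0,-1,0] := by
  ext i j
  fin_cases i <;> fin_cases j <;> simp [Omega]

theorem omegaPT_two_one : OmegaPT 2 1 = !![0,1,0,0; -1,0,0,0; 0,0,0,-1; 0,0,1,0] := by
  ext i j
  fin_cases i <;> fin_cases j <;>
    simp [OmegaPT, Tmat, omega_two, Matrix.mul_apply, Fin.sum_univ_four]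

theorem one_add_smul_pdcCoupling (t : ℝ) :
    1 + t • pdcCoupling = !![1, 0, t, 0; 0, 1, 0, -t; t, 0, 1, 0; 0, -t, 0, 1] := by
  ext i j; fin_cases i <;> fin_cases j <;> simp [pdcCoupling]

theorem pdcCoupling_mul_self : pdcCoupling * pdcCoupling = 1 := by
  ext i j; fin_cases i <;> fin_cases j <;> simp [pdcCoupling, Matrix.mul_apply, Fin.sum_univ_four]

theorem pdcCoupling_transpose : pdcCouplingᵀ = pdcCoupling := by
  ext i j; fin_cases i <;> fin_cases j <;> simp [pdcCoupling]

theorem omega_two_mul_self : Omega 2 * Omega 2 = -1 := by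
  rw [omega_two]
  ext i j; fin_cases i <;> fin_cases j <;> simp [Matrix.mul_apply, Fin.sum_univ_four]

theorem omega_two_transpose : (Omega 2)ᵀ = -Omega 2 := by
  rw [omega_two]; ext i j; fin_cases i <;> fin_cases j <;> simp

theorem pdcCoupling_mul_omega_two : pdcCoupling * Omega 2 = -(Omega 2 * pdcCoupling) := by
  rw [omega_two]
  ext i j; fin_cases i <;> fin_cases j <;>
    simp [pdcCoupling, Matrix.mul_apply, Fin.sum_univ_four]

theorem omegaPT_two_one_transpose_mul_self : (OmegaPT 2 1)ᵀ * OmegaPT 2 1 = 1 := by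
  rw [omegaPT_two_one]
  ext i j; fin_cases i <;> fin_cases j <;> simp [Matrix.mul_apply, Fin.sum_univ_four]

theorem pdcCoupling_mul_omegaPT_two_one :
    pdcCoupling * OmegaPT 2 1 = OmegaPT 2 1 * pdcCoupling := by
  rw [omegaPT_two_one]
  ext i j; fin_cases i <;> fin_cases j <;>
    simp [pdcCoupling, Matrix.mul_apply, Fin.sum_univ_four]

theorem pdcCoupling_ne_one : pdcCoupling ≠ 1 := fun h => by
  simpa [pdcCoupling] using congrFun (congrFun h 0) 0

theorem pdcCoupling_ne_neg_one : pdcCoupling ≠ -1 := fun h => by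
  simpa [pdcCoupling] using congrFun (congrFun h 0) 0

theorem isCM_two_smul_one_add_smul_pdcCoupling {c t : ℝ} (hc : 0 ≤ c)
    (hct : 1 ≤ c ^ 2 * (1 - t ^ 2)) : IsCM 2 (c • (1 + t • pdcCoupling)) := by
  refine ⟨by rw [IsSymm, transpose_smul, transpose_add, transpose_smul, transpose_one,
    pdcCoupling_transpose], ?_⟩
  let φ : Matrix (Fin (2*2)) (Fin (2*2)) ℝ →ₐ[ℝ] Matrix (Fin (2*2)) (Fin (2*2)) ℂ :=
    Complex.ofRealAm.mapMatrix
  have hφ : Function.Semiconj Complex.ofRealAm star star := fun x => (Complex.conj_ofReal x).symm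
  have hφX : ∀ X, X.map (Complex.ofReal ·) = φ X := fun _ => rfl
  set K := (c * t) • φ pdcCoupling + Complex.I • φ (Omega 2)
  have hH : (c • (1 + t • pdcCoupling)).map (Complex.ofReal ·) +
      Complex.I • (Omega 2).map (Complex.ofReal ·) = c • 1 + K := by
    rw [hφX, hφX, map_smul, map_add, map_one, map_smul, smul_add, smul_smul, add_assoc]
  have hK : K.IsHermitian := by
    have hΩ : (φ (Omega 2))ᴴ = -φ (Omega 2) := by
      rw [AlgHom.mapMatrix_apply, ← conjTranspose_map _ hφ, conjTranspose_eq_transpose_of_trivial,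
        omega_two_transpose, Matrix.map_neg _ (map_neg _)]
    refine IsHermitian.add (IsHermitian.smul ?_ (.all _)) ?_
    · exact IsHermitian.map (by rw [IsHermitian, conjTranspose_eq_transpose_of_trivial,
        pdcCoupling_transpose]) _ hφ
    · rw [IsHermitian, conjTranspose_smul, hΩ, Complex.star_def, Complex.conj_I, neg_smul_neg]
  set s := √(1 + (c * t) ^ 2)
  have hs : 0 < s := Real.sqrt_pos.mpr (by positivity)
  have hKK : K * K = (s ^ 2) • 1 := by
    have hM : φ pdcCoupling * φ pdcCoupling = 1 := by
      rw [← map_mul, pdcCoupling_mul_self, map_one]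
    have hΩ : φ (Omega 2) * φ (Omega 2) = -1 := by
      rw [← map_mul, omega_two_mul_self, map_neg, map_one]
    have hMΩ : φ pdcCoupling * φ (Omega 2) = -(φ (Omega 2) * φ pdcCoupling) := by
      rw [← map_mul, pdcCoupling_mul_omega_two, map_neg, map_mul]
    rw [Real.sq_sqrt (by positivity)]
    simp only [K, add_mul, mul_add, smul_mul_assoc, mul_smul_comm, hM, hΩ, hMΩ, smul_neg]
    match_scalars
    · linear_combination -Complex.I_sq
    · ring
  have hsc : s ≤ c := (Real.sqrt_le_left hc).mpr (by nlinarith)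
  rw [hH, show c • (1 : Matrix (Fin (2*2)) (Fin (2*2)) ℂ) + K = (c - s) • 1 + (s • 1 + K) by
    module]
  exact (PosSemidef.one.smul (sub_nonneg.mpr hsc)).add
    (hK.posSemidef_smul_one_add_of_mul_self_eq hs hKK)

theorem nuSq_two_one_smul_one_add_smul_pdcCoupling {c t : ℝ} (hc : 0 ≤ c) (ht₀ : 0 ≤ t)
    (ht₁ : t ≤ 1) : nuSq 2 1 (c • (1 + t • pdcCoupling)) = (c * (1 - t)) ^ 2 := by
  have hPSD : (c • (1 + t • pdcCoupling)).PosSemidef := by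
    have h1M : ((1 : ℝ) • 1 + pdcCoupling).PosSemidef :=
      IsHermitian.posSemidef_smul_one_add_of_mul_self_eq
        (by rw [IsHermitian, conjTranspose_eq_transpose_of_trivial, pdcCoupling_transpose])
        one_pos (by rw [pdcCoupling_mul_self, one_pow, one_smul])
    rw [show (1 : Matrix (Fin (2*2)) (Fin (2*2)) ℝ) + t • pdcCoupling =
      (1 - t) • 1 + t • ((1 : ℝ) • 1 + pdcCoupling) by module]
    exact ((PosSemidef.one.smul (sub_nonneg.mpr ht₁)).add (h1M.smul ht₀)).smul hc
  have hΩ : (OmegaPT 2 1)ᵀ * (c • (1 + t • pdcCoupling)) * OmegaPT 2 1 =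
      c • (1 + t • pdcCoupling) := by
    have hM : (OmegaPT 2 1)ᵀ * pdcCoupling * OmegaPT 2 1 = pdcCoupling := by
      rw [mul_assoc, pdcCoupling_mul_omegaPT_two_one, ← mul_assoc,
        omegaPT_two_one_transpose_mul_self, one_mul]
    simp only [mul_smul_comm, smul_mul_assoc, mul_add, add_mul, mul_one,
      omegaPT_two_one_transpose_mul_self, hM]
  have hsq : c • (1 + t • pdcCoupling) * (c • (1 + t • pdcCoupling)) =
      (c ^ 2 * (1 + t ^ 2)) • 1 + (c ^ 2 * (2 * t)) • pdcCoupling := by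
    simp only [add_mul, mul_add, one_mul, mul_one, smul_mul_assoc,
      mul_smul_comm, pdcCoupling_mul_self]
    module
  rw [nuSq_eq_sInf_spectrum_mul_self hPSD hΩ, hsq,
    spectrum_smul_one_add_smul_of_mul_self_eq_one pdcCoupling_mul_self pdcCoupling_ne_one
      pdcCoupling_ne_neg_one, csInf_pair, inf_eq_right.mpr (by nlinarith [sq_nonneg c])]
  ring

/-- **Parametric system, free steady state and its entanglement.** For
`A = −(1/2)𝟙₄ + χM`, `D = (1+2N)𝟙₄` with `0 ≤ χ < 1/2`, the matrix
`σ₀ = ((1+2N)/(1−4χ²))[[𝟙₂, 2χσz],[2χσz, 𝟙₂]]` is the unique solution of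
`Aσ + σAᵀ + D = 0`; it is a valid covariance matrix, with smallest partially transposed
symplectic eigenvalue `(1+2N)/(1+2χ)` for the 1 vs 1 bipartition, so that
`E_N(σ₀) = max (0, log₂(1+2χ) − log₂(1+2N))`. -/
theorem parametric_system_free_steady_state (N χ : ℝ) (hN : 0 ≤ N)
    (hχ0 : 0 ≤ χ) (hχ : χ < 1/2)
    (M A D σ₀ : Matrix (Fin (2*2)) (Fin (2*2)) ℝ)
    (hM : M = !![0,0,1,0; 0,0,0,-1; 1,0,0,0; 0,-1,0,0])
    (hA : A = (-(1/2) : ℝ) • 1 + χ • M) (hD : D = (1 + 2*N) • 1)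
    (hσ₀ : σ₀ = ((1+2*N)/(1-4*χ^2)) •
      !![1, 0, 2*χ, 0; 0, 1, 0, -(2*χ); 2*χ, 0, 1, 0; 0, -(2*χ), 0, 1]) :
    A * σ₀ + σ₀ * Aᵀ + D = 0 ∧
    (∀ σ : Matrix (Fin (2*2)) (Fin (2*2)) ℝ, A * σ + σ * Aᵀ + D = 0 → σ = σ₀) ∧
    IsCM 2 σ₀ ∧ nuMin 2 1 σ₀ = (1+2*N)/(1+2*χ) ∧
    logNeg 2 1 σ₀ = max 0 (Real.logb 2 (1+2*χ) - Real.logb 2 (1+2*N)) := by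
  obtain rfl : M = pdcCoupling := hM
  have hden : 0 < 1 - 4 * χ ^ 2 := by nlinarith
  set c := (1 + 2 * N) / (1 - 4 * χ ^ 2) with hc
  have hc₁ : 1 ≤ c := by rw [hc, le_div_iff₀ hden]; nlinarith
  have hAT : Aᵀ = A := by
    rw [hA, transpose_add, transpose_smul, transpose_smul, transpose_one, pdcCoupling_transpose]
  have hσ₀' : σ₀ = c • (1 + (2 * χ) • pdcCoupling) := by
    rw [hσ₀, one_add_smul_pdcCoupling]
  have hsolves : A * σ₀ + σ₀ * Aᵀ + D = 0 := by
    rw [hAT, hA, hD, hσ₀']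
    exact lyapunov_steady_state pdcCoupling_mul_self hden.ne' _
  have hν : nuMin 2 1 σ₀ = (1 + 2 * N) / (1 + 2 * χ) := by
    rw [nuMin, hσ₀', nuSq_two_one_smul_one_add_smul_pdcCoupling (by positivity) (by positivity)
      (by linarith), Real.sqrt_sq (by nlinarith), hc]
    field_simp
    ring
  refine ⟨hsolves, fun σ hσ => ?_, ?_, hν, ?_⟩
  · rw [hAT, hA] at hσ hsolves
    exact lyapunov_injective pdcCoupling_mul_self hden.ne'
      (add_right_cancel (hσ.trans hsolves.symm))
  · rw [hσ₀']
    refine isCM_two_smul_one_add_smul_pdcCoupling (by positivity) ?_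
    have hcN : c * (1 - 4 * χ ^ 2) = 1 + 2 * N := div_mul_cancel₀ _ hden.ne'
    nlinarith
  · rw [logNeg, hν, Real.logb_div (by positivity) (by positivity), neg_sub]
end
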